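/- Let Ω be a convex body in ℝ^{n+1} with support function u(x) = max_{z ∈ Ω} ⟨x, z⟩ on 𝕊^n. Then the function F(t) = (1/ω_n) ∫_{𝕊^n} log( u(x) + ⟨t, x⟩ ) dθ(x) is strictly concave on the open convex set of t ∈ ℝ^{n+1} for which u(x) + ⟨t, x⟩ > 0 for all x ∈ 𝕊^n; that is, for distinct t₀, t₁ in this set and 0 < s < 1, F((1−s)t₀ + s t₁) > (1−s)F(t₀) + sF(t₁). -/

import Mathlib

/-!
For each `x ∈ 𝕊ⁿ` the map `t ↦ log (u x + ⟪t, x⟫)` is concave, and strictly concave along the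
segment `[t₀, t₁]` unless `⟪t₁ - t₀, x⟫ = 0`. Integrating gives the inequality, strict as soon as
`{x ∈ 𝕊ⁿ | ⟪t₁ - t₀, x⟫ ≠ 0}` has positive measure.

The only facts needed about the `n`-dimensional Hausdorff measure of the sphere come from caps:
the cap around a unit vector `v` is the graph of `w ↦ w + √(1 - ‖w‖²) v` over a disc in `vᗮ`.
The orthogonal projection onto `vᗮ` is `1`-Lipschitz and maps the cap onto that disc, so the cap
has positive measure; the graph map is `C¹`, hence Lipschitz, on the disc, so the cap has finite
measure, and by compactness finitely many caps cover the sphere.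
-/

open MeasureTheory Metric Set Filter
open scoped RealInnerProductSpace Topology

noncomputable section

abbrev Eu (n : ℕ) := EuclideanSpace ℝ (Fin (n+1))

/-- Support function of `Ω` with respect to the point `z₀`. -/
def suppFn (n : ℕ) (Ω : Set (Eu n)) (z₀ x : Eu n) : ℝ :=
  sSup ((fun z => ⟪x, z - z₀⟫) '' Ω)

/-- The unit sphere `𝕊ⁿ ⊂ ℝ^{n+1}`. -/
def sph (n : ℕ) : Set (Eu n) := sphere (0 : Eu n) 1

/-- The surface measure on `ℝ^{n+1}` (n-dimensional Hausdorff measure). -/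
def sphMeasure (n : ℕ) : Measure (Eu n) := μH[(n : ℝ)]

/-- `ω_n`, the surface area of `𝕊ⁿ`. -/
def omegaN (n : ℕ) : ℝ := (sphMeasure n (sph n)).toReal

/-- `(1/ω_n) ∫_{𝕊ⁿ} log u_{z₀}`. -/
def entropyIntegral (n : ℕ) (Ω : Set (Eu n)) (z₀ : Eu n) : ℝ :=
  (1 / omegaN n) * ∫ x in sph n, Real.log (suppFn n Ω z₀ x) ∂(sphMeasure n)

/-- The entropy `E(Ω)`: sup over points with positive support function. -/
def entropy (n : ℕ) (Ω : Set (Eu n)) : ℝ :=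
  sSup { r | ∃ z₀ ∈ Ω, (∀ x ∈ sph n, 0 < suppFn n Ω z₀ x) ∧ r = entropyIntegral n Ω z₀ }

/-- The polar dual translated to the origin: `Ω*_{z₀} - z₀`. -/
def polarDual0 (n : ℕ) (Ω : Set (Eu n)) (z₀ : Eu n) : Set (Eu n) :=
  {y | ∀ z ∈ Ω, ⟪y, z - z₀⟫ ≤ 1}

/-- The polar dual of `Ω` with respect to `z₀`. -/
def polarDual (n : ℕ) (Ω : Set (Eu n)) (z₀ : Eu n) : Set (Eu n) :=
  (fun y => z₀ + y) '' polarDual0 n Ω z₀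

/-- A convex body: compact convex with nonempty interior. -/
def IsConvexBody (n : ℕ) (Ω : Set (Eu n)) : Prop :=
  Convex ℝ Ω ∧ IsCompact Ω ∧ (interior Ω).Nonempty

/-- The Santaló point: interior point minimizing the volume of the polar dual. -/
def IsSantaloPoint (n : ℕ) (Ω : Set (Eu n)) (zs : Eu n) : Prop :=
  zs ∈ interior Ω ∧ ∀ z₀ ∈ interior Ω, volume (polarDual n Ω zs) ≤ volume (polarDual n Ω z₀)

/-- The entropy point: a point of `Ω` where the entropy supremum is attained. -/
def IsEntropyPoint (n : ℕ) (Ω : Set (Eu n)) (ze : Eu n) : Prop :=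
  ze ∈ Ω ∧ entropy n Ω = entropyIntegral n Ω ze

/-- The closed unit ball `B(1) ⊂ ℝ^{n+1}`. -/
def unitBall (n : ℕ) : Set (Eu n) := closedBall (0 : Eu n) 1

open scoped ENNReal EuclideanSpace
open Module (finrank)

section SphereCap

variable {E : Type*} [NormedAddCommGroup E] [InnerProductSpace ℝ E]

def hemisphereGraph (v : E) (w : (ℝ ∙ v)ᗮ) : E := (w : E) + √(1 - ‖w‖ ^ 2) • v

def sphereCap (v : E) : Set E := hemisphereGraph v '' closedBall 0 (1 / 2)

variable {v : E}

lemma orthogonalProjectionOnto_hemisphereGraph (w : (ℝ ∙ v)ᗮ) :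
    (ℝ ∙ v)ᗮ.orthogonalProjectionOnto (hemisphereGraph v w) = w := by
  rw [hemisphereGraph, map_add, map_smul, Submodule.orthogonalProjectionOnto_mem_subspace_eq_self,
    Submodule.orthogonalProjectionOnto_orthogonal_apply_eq_zero
      (Submodule.mem_span_singleton_self v), smul_zero, add_zero]

lemma inner_hemisphereGraph (hv : ‖v‖ = 1) (w : (ℝ ∙ v)ᗮ) :
    ⟪v, hemisphereGraph v w⟫ = √(1 - ‖w‖ ^ 2) := by
  rw [hemisphereGraph, inner_add_right,
    Submodule.mem_orthogonal_singleton_iff_inner_right.1 w.2, real_inner_smul_right,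
    real_inner_self_eq_norm_sq, hv]
  ring

lemma hemisphereGraph_mem_sphere (hv : ‖v‖ = 1) {w : (ℝ ∙ v)ᗮ} (hw : ‖w‖ ≤ 1) :
    hemisphereGraph v w ∈ sphere (0 : E) 1 := by
  have hperp : ⟪(w : E), √(1 - ‖w‖ ^ 2) • v⟫ = 0 := by
    rw [real_inner_smul_right, real_inner_comm,
      Submodule.mem_orthogonal_singleton_iff_inner_right.1 w.2, mul_zero]
  have hsq : ‖hemisphereGraph v w‖ ^ 2 = 1 := by
    rw [hemisphereGraph, norm_add_sq_real, hperp, norm_smul, hv, mul_one, Real.norm_eq_abs,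
      sq_abs, Real.sq_sqrt (by nlinarith [norm_nonneg w]), Submodule.coe_norm]
    ring
  rw [mem_sphere_zero_iff_norm]
  nlinarith [norm_nonneg (hemisphereGraph v w)]

lemma hemisphereGraph_orthogonalProjectionOnto (hv : ‖v‖ = 1) {x : E}
    (hx : x ∈ sphere (0 : E) 1) (hvx : 0 ≤ ⟪v, x⟫) :
    hemisphereGraph v ((ℝ ∙ v)ᗮ.orthogonalProjectionOnto x) = x := by
  have hproj : ((ℝ ∙ v)ᗮ.orthogonalProjectionOnto x : E) = x - ⟪v, x⟫ • v := by
    rw [← Submodule.starProjection_apply, Submodule.starProjection_orthogonal_val,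
      Submodule.starProjection_unit_singleton ℝ hv]
  have hperp : ⟪x - ⟪v, x⟫ • v, ⟪v, x⟫ • v⟫ = 0 := by
    rw [inner_sub_left, real_inner_smul_left, real_inner_smul_right, real_inner_smul_right,
      real_inner_self_eq_norm_sq, hv, real_inner_comm]
    ring
  have hnorm : ‖(ℝ ∙ v)ᗮ.orthogonalProjectionOnto x‖ ^ 2 = 1 - ⟪v, x⟫ ^ 2 := by
    have := norm_add_sq_real (x - ⟪v, x⟫ • v) (⟪v, x⟫ • v)
    rw [sub_add_cancel, mem_sphere_zero_iff_norm.1 hx, hperp, norm_smul, hv, mul_one,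
      Real.norm_eq_abs, sq_abs] at this
    rw [Submodule.coe_norm, hproj]
    linarith
  rw [hemisphereGraph, hnorm, sub_sub_cancel, Real.sqrt_sq hvx, hproj, sub_add_cancel]

lemma orthogonalProjectionOnto_image_sphereCap :
    (ℝ ∙ v)ᗮ.orthogonalProjectionOnto '' sphereCap v = closedBall 0 (1 / 2) := by
  rw [sphereCap, image_image]
  simp only [orthogonalProjectionOnto_hemisphereGraph, image_id']

lemma sphereCap_subset_sphere (hv : ‖v‖ = 1) : sphereCap v ⊆ sphere (0 : E) 1 := by
  rintro _ ⟨w, hw, rfl⟩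
  exact hemisphereGraph_mem_sphere hv ((mem_closedBall_zero_iff.1 hw).trans (by norm_num))

lemma inner_pos_of_mem_sphereCap (hv : ‖v‖ = 1) {x : E} (hx : x ∈ sphereCap v) : 0 < ⟪v, x⟫ := by
  obtain ⟨w, hw, rfl⟩ := hx
  have : ‖w‖ ≤ 1 / 2 := mem_closedBall_zero_iff.1 hw
  rw [inner_hemisphereGraph hv, Real.sqrt_pos]
  nlinarith [norm_nonneg w]

lemma mem_sphereCap (hv : ‖v‖ = 1) {x : E} (hx : x ∈ sphere (0 : E) 1) (hvx : 0 ≤ ⟪v, x⟫)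
    (hpx : ‖(ℝ ∙ v)ᗮ.orthogonalProjectionOnto x‖ ≤ 1 / 2) : x ∈ sphereCap v :=
  ⟨_, mem_closedBall_zero_iff.2 hpx, hemisphereGraph_orthogonalProjectionOnto hv hx hvx⟩

lemma contDiffOn_hemisphereGraph (v : E) :
    ContDiffOn ℝ 1 (hemisphereGraph v) (closedBall 0 (1 / 2)) := by
  intro w hw
  have : ‖w‖ ≤ 1 / 2 := mem_closedBall_zero_iff.1 hw
  apply ContDiffAt.contDiffWithinAt
  unfold hemisphereGraph
  apply (ℝ ∙ v)ᗮ.subtypeL.contDiff.contDiffAt.add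
  apply ContDiffAt.smul _ contDiffAt_const
  apply ContDiffAt.sqrt (contDiffAt_const.sub (contDiff_norm_sq ℝ).contDiffAt)
  nlinarith [norm_nonneg w]

end SphereCap

section CapMeasure

variable {E : Type*} [NormedAddCommGroup E] [InnerProductSpace ℝ E] [MeasurableSpace E]
  [BorelSpace E] {n : ℕ} [Fact (finrank ℝ E = n + 1)] {v : E}

lemma isAddHaarMeasure_hausdorffMeasure_orthogonal_span_singleton (hv : v ≠ 0) :
    (μH[n] : Measure (ℝ ∙ v)ᗮ).IsAddHaarMeasure := by
  have : FiniteDimensional ℝ E := .of_fact_finrank_eq_succ n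
  have := isAddHaarMeasure_hausdorffMeasure (E := (ℝ ∙ v)ᗮ)
  rwa [Submodule.finrank_orthogonal_span_singleton (n := n) hv] at this

lemma hausdorffMeasure_sphereCap_pos (hv : ‖v‖ = 1) : 0 < μH[n] (sphereCap v) := by
  have := isAddHaarMeasure_hausdorffMeasure_orthogonal_span_singleton (n := n)
    (norm_ne_zero_iff.1 (hv ▸ one_ne_zero))
  have hle := (ℝ ∙ v)ᗮ.lipschitzWith_orthogonalProjectionOnto.hausdorffMeasure_image_le
    (Nat.cast_nonneg n) (sphereCap v)
  rw [orthogonalProjectionOnto_image_sphereCap, ENNReal.coe_one, ENNReal.one_rpow, one_mul] at hle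
  exact (measure_closedBall_pos _ _ (by norm_num)).trans_le hle

lemma hausdorffMeasure_sphereCap_lt_top (hv : v ≠ 0) : μH[n] (sphereCap v) < ∞ := by
  have : FiniteDimensional ℝ E := .of_fact_finrank_eq_succ n
  have := isAddHaarMeasure_hausdorffMeasure_orthogonal_span_singleton (n := n) hv
  obtain ⟨K, hK⟩ := (contDiffOn_hemisphereGraph v).exists_lipschitzOnWith one_ne_zero
    (convex_closedBall _ _) (isCompact_closedBall _ _)
  calc μH[n] (sphereCap v)
      ≤ K ^ (n : ℝ) * (μH[n] : Measure (ℝ ∙ v)ᗮ) (closedBall 0 (1 / 2)) :=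
        hK.hausdorffMeasure_image_le (Nat.cast_nonneg n)
    _ < ∞ := ENNReal.mul_lt_top (ENNReal.rpow_lt_top_of_nonneg (Nat.cast_nonneg n)
        ENNReal.coe_ne_top) (isCompact_closedBall _ _).measure_lt_top

lemma hausdorffMeasure_sphere_lt_top : μH[n] (sphere (0 : E) 1) < ∞ := by
  have : FiniteDimensional ℝ E := .of_fact_finrank_eq_succ n
  let U : E → Set E := fun v ↦
    {y | 0 < ⟪v, y⟫} ∩ {y | ‖(ℝ ∙ v)ᗮ.orthogonalProjectionOnto y‖ < 1 / 2}
  have hU : ∀ v ∈ sphere (0 : E) 1, IsOpen (U v) := fun v _ ↦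
    (isOpen_lt continuous_const (by fun_prop)).inter (isOpen_lt (by fun_prop) continuous_const)
  have hcover : sphere (0 : E) 1 ⊆ ⋃ v ∈ sphere (0 : E) 1, U v := by
    intro x hx
    refine mem_biUnion hx ⟨?_, ?_⟩
    · simp [mem_sphere_zero_iff_norm.1 hx]
    · show ‖_‖ < _
      rw [Submodule.orthogonalProjectionOnto_orthogonal_apply_eq_zero
        (Submodule.mem_span_singleton_self x), norm_zero]
      norm_num
  obtain ⟨b, hbS, hb, hcov⟩ := (isCompact_sphere (0 : E) 1).elim_finite_subcover_image hU hcover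
  have hcaps : sphere (0 : E) 1 ⊆ ⋃ v ∈ b, sphereCap v := by
    intro x hx
    obtain ⟨v, hvb, hxv⟩ := mem_iUnion₂.1 (hcov hx)
    exact mem_biUnion hvb
      (mem_sphereCap (mem_sphere_zero_iff_norm.1 (hbS hvb)) hx hxv.1.le hxv.2.le)
  refine (measure_mono hcaps).trans_lt (measure_biUnion_lt_top hb fun v hv ↦ ?_)
  exact hausdorffMeasure_sphereCap_lt_top (ne_zero_of_mem_unit_sphere ⟨v, hbS hv⟩)

lemma hausdorffMeasure_sphere_pos : 0 < μH[n] (sphere (0 : E) 1) := by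
  have : Nontrivial E := Module.nontrivial_of_finrank_eq_succ (Fact.out : finrank ℝ E = n + 1)
  obtain ⟨v, hv⟩ := exists_norm_eq E zero_le_one
  exact (hausdorffMeasure_sphereCap_pos hv).trans_le (measure_mono (sphereCap_subset_sphere hv))

lemma hausdorffMeasure_inner_ne_zero_inter_sphere_pos {w : E} (hw : w ≠ 0) :
    0 < μH[n] ({x | ⟪w, x⟫ ≠ 0} ∩ sphere (0 : E) 1) := by
  have hv : ‖‖w‖⁻¹ • w‖ = 1 := norm_smul_inv_norm hw
  refine (hausdorffMeasure_sphereCap_pos hv).trans_le (measure_mono fun x hx ↦ ⟨?_, ?_⟩)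
  · have := inner_pos_of_mem_sphereCap hv hx
    rw [real_inner_smul_left] at this
    exact right_ne_zero_of_mul this.ne'
  · exact sphereCap_subset_sphere hv hx

end CapMeasure

theorem StrictConcaveOn.lt_integral_comp_combination {X : Type*} [MeasurableSpace X]
    {μ : Measure X} {φ : ℝ → ℝ} {D : Set ℝ} (hφ : StrictConcaveOn ℝ D φ) {a b : X → ℝ}
    (ha : ∀ᵐ x ∂μ, a x ∈ D) (hb : ∀ᵐ x ∂μ, b x ∈ D)
    (hia : Integrable (fun x ↦ φ (a x)) μ) (hib : Integrable (fun x ↦ φ (b x)) μ)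
    {s : ℝ} (his : Integrable (fun x ↦ φ ((1 - s) * a x + s * b x)) μ)
    (hab : μ {x | a x ≠ b x} ≠ 0) (hs0 : 0 < s) (hs1 : s < 1) :
    (1 - s) * ∫ x, φ (a x) ∂μ + s * ∫ x, φ (b x) ∂μ <
      ∫ x, φ ((1 - s) * a x + s * b x) ∂μ := by
  set f := fun x ↦ (1 - s) * φ (a x) + s * φ (b x)
  set g := fun x ↦ φ ((1 - s) * a x + s * b x)
  have hle : 0 ≤ᵐ[μ] g - f := by
    filter_upwards [ha, hb] with x hax hbx
    exact sub_nonneg.2 (hφ.concaveOn.2 hax hbx (by linarith) hs0.le (by ring))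
  have hsupp : {x | a x ≠ b x} ≤ᵐ[μ] Function.support (g - f) := by
    filter_upwards [ha, hb] with x hax hbx hne
    exact (sub_pos.2 (hφ.2 hax hbx hne (by linarith) hs0 (by ring))).ne'
  have hfi : Integrable f μ := (hia.const_mul _).add (hib.const_mul _)
  have hpos : 0 < ∫ x, (g - f) x ∂μ :=
    (integral_pos_iff_support_of_nonneg_ae hle (his.sub hfi)).2
      ((pos_iff_ne_zero.2 hab).trans_le (measure_mono_ae hsupp))
  rw [integral_sub' his hfi, integral_add (hia.const_mul _) (hib.const_mul _), integral_const_mul,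
    integral_const_mul] at hpos
  linarith

lemma continuous_suppFn {n : ℕ} {Ω : Set (Eu n)} (hΩ : IsCompact Ω) (z₀ : Eu n) :
    Continuous (suppFn n Ω z₀) :=
  hΩ.continuous_sSup (f := fun x z ↦ ⟪x, z - z₀⟫)
    (continuous_fst.inner (continuous_snd.sub continuous_const))

lemma omegaN_pos (n : ℕ) : 0 < omegaN n :=
  ENNReal.toReal_pos hausdorffMeasure_sphere_pos.ne' hausdorffMeasure_sphere_lt_top.ne

lemma measurableSet_sph (n : ℕ) : MeasurableSet (sph n) :=
  isClosed_sphere.measurableSet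

lemma ContinuousOn.integrableOn_sph {n : ℕ} {f : Eu n → ℝ} (hf : ContinuousOn f (sph n)) :
    IntegrableOn f (sph n) (sphMeasure n) :=
  hf.integrableOn_of_subset_isCompact (isCompact_sphere 0 1) (measurableSet_sph n) subset_rfl
    hausdorffMeasure_sphere_lt_top.ne

lemma integrableOn_sph_log_suppFn_add_inner {n : ℕ} {Ω : Set (Eu n)} (hΩ : IsCompact Ω)
    {t : Eu n} (ht : ∀ x ∈ sph n, 0 < suppFn n Ω 0 x + ⟪t, x⟫) :
    IntegrableOn (fun x ↦ Real.log (suppFn n Ω 0 x + ⟪t, x⟫)) (sph n) (sphMeasure n) :=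
  ContinuousOn.integrableOn_sph <| ((continuous_suppFn hΩ 0).add
    (continuous_const.inner continuous_id)).continuousOn.log fun x hx ↦ (ht x hx).ne'

lemma sphMeasure_restrict_inner_ne_ne_zero {n : ℕ} {t₀ t₁ : Eu n} (hne : t₀ ≠ t₁) :
    (sphMeasure n).restrict (sph n) {x | ⟪t₀, x⟫ ≠ ⟪t₁, x⟫} ≠ 0 := by
  rw [← pos_iff_ne_zero, Measure.restrict_apply' (measurableSet_sph n)]
  refine (hausdorffMeasure_inner_ne_zero_inter_sphere_pos (n := n) (sub_ne_zero.2 hne)).trans_le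
    (measure_mono (inter_subset_inter_left _ fun x hx h ↦ hx ?_))
  rw [inner_sub_left, h, sub_self]

theorem strict_concavity_F_general (n : ℕ) (Ω : Set (Eu n))
    (hΩ : IsConvexBody n Ω) (t₀ t₁ : Eu n)
    (h₀ : ∀ x ∈ sph n, 0 < suppFn n Ω 0 x + ⟪t₀, x⟫)
    (h₁ : ∀ x ∈ sph n, 0 < suppFn n Ω 0 x + ⟪t₁, x⟫)
    (hne : t₀ ≠ t₁) (s : ℝ) (hs0 : 0 < s) (hs1 : s < 1) :
    (1 - s) * ((1 / omegaN n) *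
        ∫ x in sph n, Real.log (suppFn n Ω 0 x + ⟪t₀, x⟫) ∂(sphMeasure n)) +
      s * ((1 / omegaN n) *
        ∫ x in sph n, Real.log (suppFn n Ω 0 x + ⟪t₁, x⟫) ∂(sphMeasure n)) <
    (1 / omegaN n) *
      ∫ x in sph n,
        Real.log (suppFn n Ω 0 x + ⟪(1 - s) • t₀ + s • t₁, x⟫) ∂(sphMeasure n) := by
  have hcomb : ∀ x, suppFn n Ω 0 x + ⟪(1 - s) • t₀ + s • t₁, x⟫ =
      (1 - s) * (suppFn n Ω 0 x + ⟪t₀, x⟫) + s * (suppFn n Ω 0 x + ⟪t₁, x⟫) := fun x ↦ by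
    rw [inner_add_left, real_inner_smul_left, real_inner_smul_left]
    ring
  have hs : ∀ x ∈ sph n, 0 < suppFn n Ω 0 x + ⟪(1 - s) • t₀ + s • t₁, x⟫ := fun x hx ↦ by
    have := h₀ x hx
    have := h₁ x hx
    rw [hcomb]
    positivity
  have hdiff : (sphMeasure n).restrict (sph n)
      {x | suppFn n Ω 0 x + ⟪t₀, x⟫ ≠ suppFn n Ω 0 x + ⟪t₁, x⟫} ≠ 0 := by
    simpa only [ne_eq, add_right_inj] using sphMeasure_restrict_inner_ne_ne_zero hne
  have key := strictConcaveOn_log_Ioi.lt_integral_comp_combination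
    (ae_restrict_of_forall_mem (measurableSet_sph n) h₀)
    (ae_restrict_of_forall_mem (measurableSet_sph n) h₁)
    (integrableOn_sph_log_suppFn_add_inner hΩ.2.1 h₀)
    (integrableOn_sph_log_suppFn_add_inner hΩ.2.1 h₁)
    (by simpa only [hcomb, IntegrableOn] using integrableOn_sph_log_suppFn_add_inner hΩ.2.1 hs)
    hdiff hs0 hs1
  simp only [← hcomb] at key
  rw [mul_left_comm, mul_left_comm s, ← mul_add]
  exact mul_lt_mul_of_pos_left key (one_div_pos.2 (omegaN_pos n))

theorem strict_concavity_F (n : ℕ) (hn : 1 ≤ n) (Ω : Set (Eu n))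
    (hΩ : IsConvexBody n Ω) (t₀ t₁ : Eu n)
    (h₀ : ∀ x ∈ sph n, 0 < suppFn n Ω 0 x + ⟪t₀, x⟫)
    (h₁ : ∀ x ∈ sph n, 0 < suppFn n Ω 0 x + ⟪t₁, x⟫)
    (hne : t₀ ≠ t₁) (s : ℝ) (hs0 : 0 < s) (hs1 : s < 1) :
    (1 - s) * ((1 / omegaN n) *
        ∫ x in sph n, Real.log (suppFn n Ω 0 x + ⟪t₀, x⟫) ∂(sphMeasure n)) +
      s * ((1 / omegaN n) *
        ∫ x in sph n, Real.log (suppFn n Ω 0 x + ⟪t₁, x⟫) ∂(sphMeasure n)) <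
    (1 / omegaN n) *
      ∫ x in sph n,
        Real.log (suppFn n Ω 0 x + ⟪(1 - s) • t₀ + s • t₁, x⟫) ∂(sphMeasure n) :=
  strict_concavity_F_general n Ω hΩ t₀ t₁ h₀ h₁ hne s hs0 hs1
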